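/- arXiv:1505.02528 — 2 statements merged into one kernel-verified Lean document; each statement's English description precedes it below -/
import Mathlib

section
/- Let m be even and q a positive integer. If the m-th order n-dimensional Hankel tensor H_m generated by h is positive definite (H_m x^m > 0 for all nonzero real x), then the (qm)-th order k-dimensional Hankel tensor H_{qm} with the same generating vector, where n = q(k-1)+1, is also positive definite. -/
/-!
Identify `x : Fin n → R` with the polynomial `p_x = ∑ xᵢ Xⁱ` (`Polynomial.ofFn`). Expanding
`p_x ^ m` shows `H x^m = ∑ₛ hₛ · [Xˢ] p_x^m`: the Hankel form only sees the polynomial `p_x ^ m`.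
Now `p_y ^ (q m) = (p_y ^ q) ^ m`, and `p_y ^ q` has degree at most `q (k - 1) < n`, so it is `p_x`
for the vector `x = y^{∗q} ∈ ℝⁿ` of its coefficients, the self-convolution of `y`. This `x` is
nonzero because `ℝ[X]` has no zero divisors, and positive definiteness of `H_m` applies to it.
-/

open Polynomial

section Hankel

variable {R : Type*} [CommSemiring R]

def hankelForm (h : ℕ → R) (m : ℕ) {n : ℕ} (x : Fin n → R) : R :=
  ∑ i : Fin m → Fin n, h (∑ j, (i j : ℕ)) * ∏ j, x (i j)

def hankelFunctional (h : ℕ → R) : R[X] →ₗ[R] R :=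
  lsum fun s => LinearMap.mulLeft R (h s)

theorem hankelFunctional_monomial (h : ℕ → R) (s : ℕ) (a : R) :
    hankelFunctional h (monomial s a) = h s * a := by
  simp [hankelFunctional]

variable [DecidableEq R]

theorem ofFn_pow {n : ℕ} (x : Fin n → R) (m : ℕ) :
    ofFn n x ^ m = ∑ i : Fin m → Fin n, monomial (∑ j, (i j : ℕ)) (∏ j, x (i j)) := by
  rw [← Fin.prod_const, ofFn_eq_sum_monomial, Finset.prod_univ_sum, Fintype.piFinset_univ]
  refine Finset.sum_congr rfl fun i _ => ?_
  simp only [← C_mul_X_pow_eq_monomial, Finset.prod_mul_distrib, ← map_prod,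
    Finset.prod_pow_eq_pow_sum]

theorem hankelForm_eq_hankelFunctional_ofFn_pow (h : ℕ → R) (m : ℕ) {n : ℕ} (x : Fin n → R) :
    hankelForm h m x = hankelFunctional h (ofFn n x ^ m) := by
  simp [ofFn_pow, map_sum, hankelFunctional_monomial, hankelForm]

theorem natDegree_ofFn_le {n : ℕ} (x : Fin n → R) : (ofFn n x).natDegree ≤ n - 1 := by
  rcases Nat.eq_zero_or_pos n with rfl | hn
  · simp
  · exact Nat.le_sub_one_of_lt (ofFn_natDegree_lt hn x)

noncomputable def selfConvPow (n q : ℕ) {k : ℕ} (y : Fin k → R) : Fin n → R :=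
  toFn n (ofFn k y ^ q)

theorem ofFn_selfConvPow {n q k : ℕ} (hn : q * (k - 1) < n) (y : Fin k → R) :
    ofFn n (selfConvPow n q y) = ofFn k y ^ q :=
  ofFn_comp_toFn_eq_id_of_natDegree_lt <|
    natDegree_pow_le.trans_lt <| (Nat.mul_le_mul_left q (natDegree_ofFn_le y)).trans_lt hn

theorem hankelForm_mul_eq_hankelForm_selfConvPow (h : ℕ → R) (m : ℕ) {n q k : ℕ}
    (hn : q * (k - 1) < n) (y : Fin k → R) :
    hankelForm h (q * m) y = hankelForm h m (selfConvPow n q y) := by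
  rw [hankelForm_eq_hankelFunctional_ofFn_pow, hankelForm_eq_hankelFunctional_ofFn_pow,
    ofFn_selfConvPow hn, pow_mul]

theorem selfConvPow_ne_zero [NoZeroDivisors R] {n q k : ℕ} (hn : q * (k - 1) < n)
    {y : Fin k → R} (hy : y ≠ 0) : selfConvPow n q y ≠ 0 := by
  have hP : ofFn k y ≠ 0 := by simpa using (injective_ofFn k).ne hy
  intro h0
  apply pow_ne_zero q hP
  rw [← ofFn_selfConvPow hn, h0, map_zero]

end Hankel

theorem stmt5_general (m q k n : ℕ)
    (hn : n = q * (k - 1) + 1) (h : ℕ → ℝ)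
    (hpd : ∀ x : Fin n → ℝ, x ≠ 0 →
      0 < ∑ i : Fin m → Fin n, h (∑ j, (i j : ℕ)) * ∏ j, x (i j)) :
    ∀ y : Fin k → ℝ, y ≠ 0 →
      0 < ∑ i : Fin (q * m) → Fin k, h (∑ j, (i j : ℕ)) * ∏ j, y (i j) := by
  intro y hy
  have hdeg : q * (k - 1) < n := by omega
  change 0 < hankelForm h (q * m) y
  rw [hankelForm_mul_eq_hankelForm_selfConvPow h m hdeg]
  exact hpd _ (selfConvPow_ne_zero hdeg hy)

theorem stmt5 (m q k n : ℕ) (hme : Even m) (hm : 0 < m) (hq : 0 < q) (hk : 0 < k)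
    (hn : n = q * (k - 1) + 1) (h : ℕ → ℝ)
    (hpd : ∀ x : Fin n → ℝ, x ≠ 0 →
      0 < ∑ i : Fin m → Fin n, h (∑ j, (i j : ℕ)) * ∏ j, x (i j)) :
    ∀ y : Fin k → ℝ, y ≠ 0 →
      0 < ∑ i : Fin (q * m) → Fin k, h (∑ j, (i j : ℕ)) * ∏ j, y (i j) :=
  stmt5_general m q k n hn h hpd
end

section
/- A positive definite real Hankel matrix H ∈ ℝ^{n×n} admits a Vandermonde decomposition H = Σ_{k=1}^{n} α_k v_k v_kᵀ with all coefficients α_k > 0, where v_k = [1, ξ_k, ..., ξ_k^{n-1}]ᵀ for mutually distinct real ξ_k. -/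
/-!
Diagonalize H and the shifted Hankel matrix G = (h (i + j + 1)) simultaneously by congruence:
H = V Vᵀ and G = V D Vᵀ with V invertible and D = diag d. (G involves h (2n - 1), which H does
not see; any value will do.) Row i + 1 of H is row i of G, and cancelling the invertible Vᵀ gives
V (i + 1) k = V i k * d k, so V = Wᵀ diag (V 0) with W the Vandermonde matrix of d. Invertibility
of V forces d to be injective and V 0 to have no zero entry, and H = Wᵀ diag ((V 0)²) W is the
required decomposition.
-/

open Matrix

theorem Fin.eq_mul_pow_of_succ_eq_mul {M : Type*} [Monoid M] {n : ℕ} {f : Fin (n + 1) → M}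
    {r : M} (h : ∀ i : Fin n, f i.succ = f i.castSucc * r) (i : Fin (n + 1)) :
    f i = f 0 * r ^ (i : ℕ) := by
  induction i using Fin.induction with
  | zero => simp
  | succ i ih => rw [h, ih, Fin.val_succ, Fin.val_castSucc, pow_succ, mul_assoc]

namespace Matrix

variable {R : Type*}

def hankel [Add R] (n : ℕ) (h : ℕ → R) : Matrix (Fin n) (Fin n) R := of fun i j => h (i + j)

theorem hankel_transpose [Add R] (n : ℕ) (h : ℕ → R) : (hankel n h)ᵀ = hankel n h := by
  ext i j
  simp only [hankel, transpose_apply, of_apply, add_comm]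

theorem hankel_succ_apply [Add R] {n : ℕ} (h : ℕ → R) (i : Fin n) (j : Fin (n + 1)) :
    hankel (n + 1) h i.succ j = hankel (n + 1) (fun k => h (k + 1)) i.castSucc j := by
  simp only [hankel, of_apply, Fin.val_succ, Fin.val_castSucc, add_right_comm]

theorem row_eq_mul_of_mul_conjTranspose_row_eq [Semiring R] [StarRing R] {n : Type*} [Fintype n]
    [DecidableEq n] {V : Matrix n n R} (hV : IsUnit V) {d : n → R} {a b : n}
    (h : (V * Vᴴ) a = (V * diagonal d * Vᴴ) b) : V a = V b * d := by
  rw [mul_apply_eq_vecMul, mul_apply_eq_vecMul, mul_apply_eq_vecMul,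
    show V b ᵥ* diagonal d = V b * d from funext (vecMul_diagonal _ _)] at h
  exact vecMul_injective_of_isUnit (by simpa [star_eq_conjTranspose] using hV.star) h

theorem isUnit_transpose_vandermonde_mul_diagonal_iff [Field R] {n : ℕ} {v c : Fin n → R} :
    IsUnit ((vandermonde v)ᵀ * diagonal c) ↔ Function.Injective v ∧ ∀ k, c k ≠ 0 := by
  simp [isUnit_iff_isUnit_det, det_transpose, det_diagonal, det_vandermonde_ne_zero_iff,
    Finset.prod_ne_zero_iff]

theorem transpose_mul_diagonal_mul_eq_sum_vecMulVec [CommSemiring R] {m n : Type*} [Fintype m]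
    [DecidableEq m] (A : Matrix m n R) (c : m → R) :
    Aᵀ * diagonal c * A = ∑ k, c k • vecMulVec (A k) (A k) := by
  ext i j
  rw [mul_apply]
  simp only [mul_diagonal, transpose_apply, sum_apply, smul_apply, vecMulVec_apply,
    smul_eq_mul]
  exact Finset.sum_congr rfl fun k _ => by ring

open scoped ComplexOrder MatrixOrder in
theorem PosDef.exists_simultaneous_diagonalization {𝕜 n : Type*} [RCLike 𝕜] [Fintype n]
    [DecidableEq n] {H G : Matrix n n 𝕜} (hH : H.PosDef) (hG : G.IsHermitian) :
    ∃ (V : Matrix n n 𝕜) (d : n → ℝ), IsUnit V ∧ H = V * Vᴴ ∧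
      G = V * diagonal (RCLike.ofReal ∘ d) * Vᴴ := by
  obtain ⟨Y, hY, rfl⟩ := CStarAlgebra.isStrictlyPositive_iff_eq_star_mul_self.mp
    hH.isStrictlyPositive
  rw [star_eq_conjTranspose]
  have hYdet : IsUnit Y.det := (isUnit_iff_isUnit_det Y).mp hY
  have hYtdet : IsUnit Yᴴ.det := by simpa [det_conjTranspose] using hYdet.star
  have hM : (Yᴴ⁻¹ * G * Y⁻¹).IsHermitian := by
    simp only [IsHermitian, conjTranspose_mul, conjTranspose_nonsing_inv,
      conjTranspose_conjTranspose, hG.eq, mul_assoc]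
  obtain ⟨U, d, hU, hUU, hMU⟩ :
      ∃ (U : Matrix n n 𝕜) (d : n → ℝ), IsUnit U ∧ U * Uᴴ = 1 ∧
      Yᴴ⁻¹ * G * Y⁻¹ = U * diagonal (RCLike.ofReal ∘ d) * Uᴴ :=
    ⟨_, _, Unitary.isUnit_coe .., Unitary.mul_star_self_of_mem hM.eigenvectorUnitary.2,
      hM.spectral_theorem⟩
  have hGM : G = Yᴴ * (Yᴴ⁻¹ * G * Y⁻¹) * Y := by
    rw [mul_assoc, mul_assoc, nonsing_inv_mul _ hYdet, mul_one,
      mul_nonsing_inv_cancel_left _ _ hYtdet]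
  refine ⟨Yᴴ * U, d, ((isUnit_iff_isUnit_det _).mpr hYtdet).mul hU, ?_, ?_⟩
  · rw [conjTranspose_mul, mul_assoc, ← mul_assoc U, hUU, one_mul, conjTranspose_conjTranspose]
  · rw [hGM, hMU, conjTranspose_mul, conjTranspose_conjTranspose]
    simp only [mul_assoc]

end Matrix

theorem stmt13 (n : ℕ) (hn : 0 < n) (h : ℕ → ℝ)
    (H : Matrix (Fin n) (Fin n) ℝ)
    (hH : ∀ i j, H i j = h ((i : ℕ) + (j : ℕ)))
    (hpd : H.PosDef) :
    ∃ (ξ : Fin n → ℝ) (α : Fin n → ℝ),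
      Function.Injective ξ ∧ (∀ k, 0 < α k) ∧
      H = ∑ k, α k • Matrix.vecMulVec (fun i : Fin n => ξ k ^ (i : ℕ))
            (fun i : Fin n => ξ k ^ (i : ℕ)) := by
  obtain ⟨m, rfl⟩ := Nat.exists_eq_add_one_of_ne_zero hn.ne'
  have hHankel : H = hankel (m + 1) h := ext hH
  have hG : (hankel (m + 1) fun k => h (k + 1)).IsHermitian := by
    rw [IsHermitian, conjTranspose_eq_transpose_of_trivial, hankel_transpose]
  obtain ⟨V, d, hV, hHV, hGV⟩ := hpd.exists_simultaneous_diagonalization hG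
  simp only [RCLike.ofReal_real_eq_id, Function.id_comp] at hGV
  have hshift (i : Fin m) : V i.succ = V i.castSucc * d := by
    refine row_eq_mul_of_mul_conjTranspose_row_eq hV ?_
    ext j
    rw [← hHV, ← hGV, hHankel, hankel_succ_apply]
  set c := V 0
  have hVandermonde : V = (vandermonde d)ᵀ * diagonal c := by
    ext i k
    rw [mul_diagonal, transpose_apply, vandermonde_apply, mul_comm]
    exact Fin.eq_mul_pow_of_succ_eq_mul (f := (V · k)) (fun i => congrFun (hshift i) k) i
  rw [hVandermonde, isUnit_transpose_vandermonde_mul_diagonal_iff] at hV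
  refine ⟨d, c * c, hV.1, fun k => mul_self_pos.mpr (hV.2 k), ?_⟩
  rw [hHV, hVandermonde, conjTranspose_eq_transpose_of_trivial, transpose_mul, transpose_transpose,
    diagonal_transpose, mul_assoc, ← mul_assoc (diagonal _), diagonal_mul_diagonal, ← mul_assoc,
    transpose_mul_diagonal_mul_eq_sum_vecMulVec]
  rfl
end
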